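/- arXiv:0709.0837 — 3 statements merged into one kernel-verified Lean document; each statement's English description precedes it below -/
import Mathlib

section
/- Let p: P ⥤ X be a functor between small categories, let F: Xᵒᵖ ⥤ Type be the presheaf sending x to π₀(x/p) (with action by precomposition), and let m_F: ∫F ⥤ X be the projection from the category of elements of F. Then there is a functor η: P ⥤ ∫F with m_F ∘ η = p, sending an object a to (p a, [id_{p a}]), which exhibits m_F as the reflection of p into discrete fibrations over X: for every discrete fibration n: N ⥤ X and every functor k: P ⥤ N with n ∘ k = p, there is a unique functor u: ∫F ⥤ N with n ∘ u = m_F and u ∘ η = k. -/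
open CategoryTheory CategoryTheory.Limits

universe u

/-- The discrete reflection presheaf `↓p` of a functor `p : P ⥤ X`: it sends `x` to the set
`π₀(x/p)` of connected components of the comma category `x/p`, with action given by
precomposition. -/
noncomputable def reflPresheaf {P X : Type u} [SmallCategory P] [SmallCategory X]
    (p : P ⥤ X) : Xᵒᵖ ⥤ Type u where
  obj x := ConnectedComponents (StructuredArrow x.unop p)
  map g := TypeCat.ofHom (StructuredArrow.map g.unop).mapConnectedComponents
  map_id x := by
    ext c
    obtain ⟨s, rfl⟩ := Quotient.exists_rep c
    exact Quotient.sound (Zigzag.of_hom (StructuredArrow.homMk (𝟙 s.right) (by simp)))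
  map_comp {x y z} g h := by
    ext c
    obtain ⟨s, rfl⟩ := Quotient.exists_rep c
    exact Quotient.sound (Zigzag.of_hom (StructuredArrow.homMk (𝟙 s.right) (by simp)))

/-- A functor `n : N ⥤ X` is a discrete fibration if every morphism `g : x ⟶ n b` of `X`
has a unique lifting to a morphism of `N` with codomain `b`. -/
def IsDiscreteFibration {N X : Type u} [SmallCategory N] [SmallCategory X]
    (n : N ⥤ X) : Prop :=
  ∀ (b : N) ⦃x : X⦄ (g : x ⟶ n.obj b),
    ∃! fl : Σ a : N, a ⟶ b, ∃ e : n.obj fl.1 = x, n.map fl.2 = eqToHom e ≫ g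

/-- The category of elements `∫F` of a presheaf `F : Xᵒᵖ ⥤ Type`: objects are pairs `(x, s)`
with `s ∈ F x`, morphisms `(x,s) ⟶ (x',s')` are morphisms `g : x ⟶ x'` of `X` with
`F(g)(s') = s`. -/
structure El {X : Type u} [SmallCategory X] (F : Xᵒᵖ ⥤ Type u) : Type u where
  pt : X
  elt : F.obj (Opposite.op pt)

instance {X : Type u} [SmallCategory X] (F : Xᵒᵖ ⥤ Type u) : SmallCategory (El F) where
  Hom a b := { g : a.pt ⟶ b.pt // F.map g.op b.elt = a.elt }
  id a := ⟨𝟙 a.pt, by simp⟩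
  comp {a b c} f g := ⟨f.1 ≫ g.1, by
    have : F.map (f.1 ≫ g.1).op = F.map g.1.op ≫ F.map f.1.op := by
      rw [← F.map_comp]; rfl
    simp only [this, types_comp_apply, g.2, f.2]⟩
  id_comp f := Subtype.ext (Category.id_comp f.1)
  comp_id f := Subtype.ext (Category.comp_id f.1)
  assoc f g h := Subtype.ext (Category.assoc f.1 g.1 h.1)

/-- The projection `∫F ⥤ X` (a discrete fibration). -/
def elProj {X : Type u} [SmallCategory X] (F : Xᵒᵖ ⥤ Type u) : El F ⥤ X where
  obj a := a.pt
  map f := f.1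

/-!
A discrete fibration `n` has unique lifts, so it is faithful and every `g : x ⟶ n b` determines
an object `pullbackObj g` over `x`, the domain of its lift. The factorization `u` sends the
component of `s : x ⟶ p a` to the domain of the lift of `s` at `k a`; this is constant on
components because `s` and `s ≫ n (k m)` have the same lift domain. Conversely, every element
`[s]` over `x` maps by `s` itself to the unit object `η a`, so any `u` with `η ⋙ u = k` must send
it to the domain of the lift of `s` at `k a`; on morphisms `u` is then forced by faithfulness.
-/

namespace IsDiscreteFibration

variable {N X : Type u} [SmallCategory N] [SmallCategory X] {n : N ⥤ X}
  (hn : IsDiscreteFibration n)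

noncomputable def pullbackObj {b : N} {x : X} (g : x ⟶ n.obj b) : N :=
  (hn b g).exists.choose.1

noncomputable def pullbackMap {b : N} {x : X} (g : x ⟶ n.obj b) : hn.pullbackObj g ⟶ b :=
  (hn b g).exists.choose.2

lemma obj_pullbackObj {b : N} {x : X} (g : x ⟶ n.obj b) : n.obj (hn.pullbackObj g) = x :=
  (hn b g).exists.choose_spec.1

lemma map_pullbackMap {b : N} {x : X} (g : x ⟶ n.obj b) :
    n.map (hn.pullbackMap g) = eqToHom (hn.obj_pullbackObj g) ≫ g :=
  (hn b g).exists.choose_spec.2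

lemma pullbackObj_eq {a b : N} {x : X} (g : x ⟶ n.obj b) (f : a ⟶ b) (e : n.obj a = x)
    (hf : n.map f = eqToHom e ≫ g) : hn.pullbackObj g = a :=
  congrArg Sigma.fst <| (hn b g).unique (hn b g).exists.choose_spec (y₂ := ⟨a, f⟩) ⟨e, hf⟩

lemma pullbackObj_id (b : N) : hn.pullbackObj (𝟙 (n.obj b)) = b :=
  hn.pullbackObj_eq _ (𝟙 b) rfl (by simp)

lemma pullbackObj_comp_map {a b : N} {x : X} (g : x ⟶ n.obj a) (f : a ⟶ b) :
    hn.pullbackObj (g ≫ n.map f) = hn.pullbackObj g :=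
  hn.pullbackObj_eq _ (hn.pullbackMap g ≫ f) (hn.obj_pullbackObj g) (by simp [map_pullbackMap])

lemma pullbackObj_pullbackObj {b : N} {x y : X} (g : y ⟶ n.obj b) (h : x ⟶ y) :
    hn.pullbackObj (h ≫ eqToHom (hn.obj_pullbackObj g).symm) = hn.pullbackObj (h ≫ g) := by
  rw [← hn.pullbackObj_comp_map _ (hn.pullbackMap g), map_pullbackMap]
  simp

include hn in
lemma map_injective {a b : N} {f f' : a ⟶ b} (h : n.map f = n.map f') : f = f' := by
  have := (hn b (n.map f)).unique (y₁ := ⟨a, f⟩) (y₂ := ⟨a, f'⟩) ⟨rfl, by simp⟩ ⟨rfl, by simp [h]⟩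
  exact eq_of_heq (Sigma.mk.inj_iff.mp this).2

variable {C : Type*} [Category C]

include hn in
lemma functor_ext {u₁ u₂ : C ⥤ N} (h : u₁ ⋙ n = u₂ ⋙ n) (hobj : ∀ c, u₁.obj c = u₂.obj c) :
    u₁ = u₂ :=
  CategoryTheory.Functor.ext hobj fun _ _ f => hn.map_injective <| by
    simpa [eqToHom_map] using Functor.congr_hom h f

noncomputable def liftFunctor (q : C ⥤ X) (o : C → N) (ho : ∀ c, n.obj (o c) = q.obj c)
    (hpb : ∀ ⦃c c'⦄ (f : c ⟶ c'), hn.pullbackObj (q.map f ≫ eqToHom (ho c').symm) = o c) :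
    C ⥤ N where
  obj := o
  map f := eqToHom (hpb f).symm ≫ hn.pullbackMap _
  map_id c := hn.map_injective <| by simp [eqToHom_map, map_pullbackMap]
  map_comp f g := hn.map_injective <| by simp [eqToHom_map, map_pullbackMap]

lemma liftFunctor_comp (q : C ⥤ X) (o : C → N) (ho : ∀ c, n.obj (o c) = q.obj c)
    (hpb : ∀ ⦃c c'⦄ (f : c ⟶ c'), hn.pullbackObj (q.map f ≫ eqToHom (ho c').symm) = o c) :
    hn.liftFunctor q o ho hpb ⋙ n = q :=
  CategoryTheory.Functor.ext ho fun _ _ f => by simp [liftFunctor, eqToHom_map, map_pullbackMap]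

end IsDiscreteFibration

lemma CategoryTheory.Zigzag.eq_of_forall_hom_eq {J α : Type*} [Category J] {f : J → α}
    (hf : ∀ ⦃j j' : J⦄, (j ⟶ j') → f j = f j') {j j' : J} (h : Zigzag j j') : f j = f j' := by
  induction h with
  | refl => rfl
  | tail _ hz ih => exact ih.trans (hz.elim (fun ⟨g⟩ => hf g) fun ⟨g⟩ => (hf g).symm)

namespace reflPresheaf

variable {P X : Type u} [SmallCategory P] [SmallCategory X]

noncomputable def unit (p : P ⥤ X) : P ⥤ El (reflPresheaf p) where
  obj a := ⟨p.obj a, Quotient.mk _ (StructuredArrow.mk (𝟙 (p.obj a)))⟩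
  map f := ⟨p.map f, Quotient.sound (Zigzag.of_inv (StructuredArrow.homMk f (by simp)))⟩
  map_id _ := Subtype.ext (p.map_id _)
  map_comp _ _ := Subtype.ext (p.map_comp _ _)

def elMk {p : P ⥤ X} {x : X} (s : StructuredArrow x p) : El (reflPresheaf p) :=
  ⟨x, Quotient.mk _ s⟩

lemma elMk_induction {p : P ⥤ X} {motive : El (reflPresheaf p) → Prop}
    (h : ∀ {x : X} (s : StructuredArrow x p), motive (elMk s)) (e : El (reflPresheaf p)) :
    motive e := by
  obtain ⟨x, c⟩ := e
  induction c using Quotient.inductionOn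
  exact h _

def toUnit {p : P ⥤ X} {x : X} (s : StructuredArrow x p) : elMk s ⟶ (unit p).obj s.right :=
  ⟨s.hom, Quotient.sound <| Zigzag.of_inv <|
    StructuredArrow.homMk (𝟙 s.right) (by simp; exact (Category.comp_id _).symm)⟩

variable {N : Type u} [SmallCategory N] {n : N ⥤ X} (hn : IsDiscreteFibration n) (k : P ⥤ N)

open IsDiscreteFibration

lemma pullbackObj_hom_eq_of_zigzag {x : X} {s t : StructuredArrow x (k ⋙ n)} (h : Zigzag s t) :
    hn.pullbackObj (b := k.obj s.right) s.hom = hn.pullbackObj (b := k.obj t.right) t.hom :=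
  Zigzag.eq_of_forall_hom_eq (f := fun s => hn.pullbackObj (b := k.obj s.right) s.hom)
    (fun _ _ m => by
      rw [← StructuredArrow.w m]
      exact (hn.pullbackObj_comp_map _ (k.map m.right)).symm) h

noncomputable def descObj (e : El (reflPresheaf (k ⋙ n))) : N :=
  Quotient.lift
    (fun s : StructuredArrow e.pt (k ⋙ n) => hn.pullbackObj (b := k.obj s.right) s.hom)
    (fun _ _ => pullbackObj_hom_eq_of_zigzag hn k) e.elt

lemma obj_descObj (e : El (reflPresheaf (k ⋙ n))) : n.obj (descObj hn k e) = e.pt := by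
  induction e using elMk_induction
  exact hn.obj_pullbackObj _

lemma descObj_eq {x : X} {c : (reflPresheaf (k ⋙ n)).obj (Opposite.op x)}
    {s : StructuredArrow x (k ⋙ n)} (h : Quotient.mk _ s = c) :
    descObj hn k ⟨x, c⟩ = hn.pullbackObj (b := k.obj s.right) s.hom := by
  subst h
  rfl

lemma pullbackObj_descObj {e e' : El (reflPresheaf (k ⋙ n))} (f : e ⟶ e') :
    hn.pullbackObj (f.1 ≫ eqToHom (obj_descObj hn k e').symm) = descObj hn k e := by
  induction e' using elMk_induction with | h s' =>
  exact (hn.pullbackObj_pullbackObj s'.hom f.1).trans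
    (descObj_eq hn k (s := StructuredArrow.mk (f.1 ≫ s'.hom)) f.2).symm

noncomputable def desc : El (reflPresheaf (k ⋙ n)) ⥤ N :=
  hn.liftFunctor (elProj _) (descObj hn k) (obj_descObj hn k) fun _ _ => pullbackObj_descObj hn k

lemma desc_comp : desc hn k ⋙ n = elProj _ :=
  hn.liftFunctor_comp ..

lemma unit_comp_desc : unit (k ⋙ n) ⋙ desc hn k = k :=
  hn.functor_ext (by rw [Functor.assoc, desc_comp]; rfl) fun a => hn.pullbackObj_id (k.obj a)

lemma eq_desc (u : El (reflPresheaf (k ⋙ n)) ⥤ N) (hu : u ⋙ n = elProj _)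
    (hku : unit (k ⋙ n) ⋙ u = k) : u = desc hn k := by
  refine hn.functor_ext (hu.trans (desc_comp hn k).symm) ?_
  intro e
  induction e using elMk_induction with | h s =>
  refine (hn.pullbackObj_eq (b := k.obj s.right) s.hom
    (u.map (toUnit s) ≫ eqToHom (Functor.congr_obj hku s.right)) (Functor.congr_obj hu _) ?_).symm
  rw [Functor.map_comp, eqToHom_map, ← Functor.comp_map, Functor.congr_hom hu]
  simp only [Category.assoc, eqToHom_trans]
  exact congrArg (eqToHom _ ≫ ·) (Category.comp_id s.hom)

end reflPresheaf

/-- for a functor `p : P ⥤ X` between small categories, with `F = ↓p` the presheaf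
`x ↦ π₀(x/p)` and `m_F : ∫F ⥤ X` the projection from the category of elements, there is a
functor `η : P ⥤ ∫F` with `m_F ∘ η = p`, sending `a` to `(p a, [𝟙 (p a)])`, which exhibits
`m_F` as the reflection of `p` into discrete fibrations over `X`: for every discrete fibration
`n : N ⥤ X` and functor `k : P ⥤ N` with `n ∘ k = p`, there is a unique `u : ∫F ⥤ N` with
`n ∘ u = m_F` and `u ∘ η = k`. -/
theorem comprehensive_reflection {P X : Type u} [SmallCategory P] [SmallCategory X]
    (p : P ⥤ X) :
    ∃ η : P ⥤ El (reflPresheaf p),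
      η ⋙ elProj (reflPresheaf p) = p ∧
      (∀ a : P, η.obj a =
        El.mk (p.obj a)
          (Quotient.mk (Zigzag.setoid _) (StructuredArrow.mk (𝟙 (p.obj a))))) ∧
      (∀ (N : Type u) [SmallCategory N] (n : N ⥤ X), IsDiscreteFibration n →
        ∀ k : P ⥤ N, k ⋙ n = p →
          ∃! u : El (reflPresheaf p) ⥤ N,
            u ⋙ n = elProj (reflPresheaf p) ∧ η ⋙ u = k) := by
  refine ⟨reflPresheaf.unit p, rfl, fun _ => rfl, fun N _ n hn k hk => ?_⟩
  -- with `p := k ⋙ n`, the objects `n (k a)` and `p a` agree definitionally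
  subst hk
  exact ⟨reflPresheaf.desc hn k, ⟨reflPresheaf.desc_comp hn k, reflPresheaf.unit_comp_desc hn k⟩,
    fun u hu => reflPresheaf.eq_desc hn k u hu.1 hu.2⟩
end

section
/- Let (E,M) be a factorization system on a category C with terminal object 1, and let p: P → X be a morphism and x: 1 → X a point with ↓p ≅ ν(x) in C/X (x is the absolute colimit of p). Then for every morphism f: X → Y, ↓(f ∘ p) ≅ ν(f ∘ x) in C/Y, i.e. f ∘ x is the absolute colimit of f ∘ p. -/
open CategoryTheory CategoryTheory.Limits

universe v u

/-- `e ⊥ m`: every commutative square from `e` to `m` has a unique diagonal filler. -/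
def IsOrth {C : Type u} [Category.{v} C] {A B M N : C} (e : A ⟶ B) (m : M ⟶ N) : Prop :=
  ∀ (u : A ⟶ M) (v : B ⟶ N), e ≫ v = u ≫ m →
    ∃! w : B ⟶ M, e ≫ w = u ∧ w ≫ m = v

/-- `^⊥M`: the class of morphisms left-orthogonal to every morphism in `M`. -/
def leftOrth {C : Type u} [Category.{v} C] (M : MorphismProperty C) : MorphismProperty C :=
  fun _ _ e => ∀ ⦃M₀ N : C⦄ (m : M₀ ⟶ N), M m → IsOrth e m

/-- `E^⊥`: the class of morphisms right-orthogonal to every morphism in `E`. -/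
def rightOrth {C : Type u} [Category.{v} C] (E : MorphismProperty C) : MorphismProperty C :=
  fun _ _ m => ∀ ⦃A B : C⦄ (e : A ⟶ B), E e → IsOrth e m

/-- A pre-factorization system: a pair of classes `(E, M)` with `E = ^⊥M` and `M = E^⊥`. -/
structure PreFactorizationSystem (C : Type u) [Category.{v} C] where
  E : MorphismProperty C
  M : MorphismProperty C
  E_eq : E = leftOrth M
  M_eq : M = rightOrth E


/-- A factorization system with a chosen `(E,M)`-factorization `f = η f ≫ refl f` of every
morphism; `refl f` is the discrete reflection `↓f` of `f`. -/
structure FactorizationData (C : Type u) [Category.{v} C] extends PreFactorizationSystem C where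
  mid : ∀ {A B : C}, (A ⟶ B) → C
  eta : ∀ {A B : C} (f : A ⟶ B), A ⟶ mid f
  refl : ∀ {A B : C} (f : A ⟶ B), mid f ⟶ B
  eta_mem : ∀ {A B : C} (f : A ⟶ B), E (eta f)
  refl_mem : ∀ {A B : C} (f : A ⟶ B), M (refl f)
  fac : ∀ {A B : C} (f : A ⟶ B), eta f ≫ refl f = f

variable {C : Type u} [Category.{v} C]

/-- A cone with base `m : M₀ ⟶ X` and vertex the point `x : 1 ⟶ X` is a morphism
`lam : m ⟶ ν(x)` over `X`, where `ν(x) = ↓x` is the neighborhood of `x`. -/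
def IsCone [HasTerminal C] (D : FactorizationData C) {M₀ X : C} (m : M₀ ⟶ X)
    (x : ⊤_ C ⟶ X) (lam : M₀ ⟶ D.mid x) : Prop :=
  lam ≫ D.refl x = m

/-- A cone `lam : m ⟶ ν(x)` is colimiting if every cone `mu : m ⟶ ν(y)` factors uniquely
through it via a morphism `ν(x) ⟶ ν(y)` over `X`; then `x` is the colimit of `m`. -/
def IsColimiting [HasTerminal C] (D : FactorizationData C) {M₀ X : C} (m : M₀ ⟶ X)
    (x : ⊤_ C ⟶ X) (lam : M₀ ⟶ D.mid x) : Prop :=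
  ∀ (y : ⊤_ C ⟶ X) (mu : M₀ ⟶ D.mid y), IsCone D m y mu →
    ∃! θ : D.mid x ⟶ D.mid y, θ ≫ D.refl y = D.refl x ∧ lam ≫ θ = mu

/-!
A morphism `g` and its precomposite `u ≫ g` with `u ∈ E` have the same discrete reflection,
because `η_g` and `u ≫ η_g` are both in `E` and `(E, M)`-factorizations are unique up to unique
isomorphism. Applied with `u = η_p`, `u = η_x` and `u` the isomorphism `↓p ≅ ↓x`, this gives
`↓(p ≫ f) ≅ ↓(↓p ≫ f) ≅ ↓(↓x ≫ f) ≅ ↓(x ≫ f)`.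
-/

namespace IsOrth

variable {A B B' M N : C} {e : A ⟶ B} {m : M ⟶ N}

lemma hom_ext (h : IsOrth e m) {w w' : B ⟶ M} (he : e ≫ w = e ≫ w')
    (hm : w ≫ m = w' ≫ m) : w = w' :=
  (h (e ≫ w) (w ≫ m) (Category.assoc _ _ _).symm).unique ⟨rfl, rfl⟩ ⟨he.symm, hm.symm⟩

lemma of_isIso [IsIso e] : IsOrth e m := by
  intro u v sq
  refine ⟨inv e ≫ u, ⟨IsIso.hom_inv_id_assoc e u, ?_⟩, fun w hw => ?_⟩
  · rw [Category.assoc, ← sq, IsIso.inv_hom_id_assoc]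
  · rw [← hw.1, IsIso.inv_hom_id_assoc]

lemma comp_left {e' : B ⟶ B'} (h : IsOrth e m) (h' : IsOrth e' m) : IsOrth (e ≫ e') m := by
  intro u v sq
  obtain ⟨w₁, hw₁u, hw₁v⟩ := (h u (e' ≫ v) (by rw [← Category.assoc, sq])).exists
  obtain ⟨w, hwu, hwv⟩ := (h' w₁ v hw₁v.symm).exists
  refine ⟨w, ⟨by rw [Category.assoc, hwu, hw₁u], hwv⟩, fun w' hw' => ?_⟩
  have hw'₁ : e' ≫ w' = w₁ :=
    (h u (e' ≫ v) (by rw [← Category.assoc, sq])).unique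
      ⟨by rw [← Category.assoc, hw'.1], by rw [Category.assoc, hw'.2]⟩ ⟨hw₁u, hw₁v⟩
  exact h'.hom_ext (hw'₁.trans hwu.symm) (hw'.2.trans hwv.symm)

end IsOrth

namespace FactorizationData

variable (D : FactorizationData C)

lemma isOrth {A B M N : C} {e : A ⟶ B} {m : M ⟶ N} (he : D.E e) (hm : D.M m) : IsOrth e m := by
  rw [D.E_eq] at he
  exact he m hm

lemma E_of_isIso {A B : C} (e : A ⟶ B) [IsIso e] : D.E e := by
  rw [D.E_eq]
  exact fun _ _ _ _ => IsOrth.of_isIso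

lemma E_comp {A B B' : C} {e : A ⟶ B} {e' : B ⟶ B'} (he : D.E e) (he' : D.E e') :
    D.E (e ≫ e') := by
  rw [D.E_eq] at he he' ⊢
  exact fun _ _ m hm => (he m hm).comp_left (he' m hm)

lemma nonempty_overIso_of_comp_eq {A B M₁ M₂ : C} {e₁ : A ⟶ M₁} {m₁ : M₁ ⟶ B}
    {e₂ : A ⟶ M₂} {m₂ : M₂ ⟶ B} (he₁ : D.E e₁) (hm₁ : D.M m₁) (he₂ : D.E e₂)
    (hm₂ : D.M m₂) (w : e₁ ≫ m₁ = e₂ ≫ m₂) : Nonempty (Over.mk m₁ ≅ Over.mk m₂) := by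
  obtain ⟨φ, hφe, hφm⟩ := (D.isOrth he₁ hm₂ e₂ m₁ w).exists
  obtain ⟨ψ, hψe, hψm⟩ := (D.isOrth he₂ hm₁ e₁ m₂ w.symm).exists
  have hφψ : φ ≫ ψ = 𝟙 M₁ := (D.isOrth he₁ hm₁).hom_ext
    (by rw [reassoc_of% hφe, hψe, Category.comp_id])
    (by rw [Category.assoc, hψm, hφm, Category.id_comp])
  have hψφ : ψ ≫ φ = 𝟙 M₂ := (D.isOrth he₂ hm₂).hom_ext
    (by rw [reassoc_of% hψe, hφe, Category.comp_id])
    (by rw [Category.assoc, hφm, hψm, Category.id_comp])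
  exact ⟨Over.isoMk ⟨φ, ψ, hφψ, hψφ⟩ hφm⟩

lemma nonempty_overIso_refl_of_E_comp {A B Z : C} {u : A ⟶ B} {g : B ⟶ Z} {h : A ⟶ Z}
    (hu : D.E u) (w : u ≫ g = h) : Nonempty (Over.mk (D.refl h) ≅ Over.mk (D.refl g)) :=
  D.nonempty_overIso_of_comp_eq (D.eta_mem h) (D.refl_mem h) (D.E_comp hu (D.eta_mem g))
    (D.refl_mem g) (by rw [D.fac, Category.assoc, D.fac, w])

end FactorizationData

/-- if `x` is the absolute colimit of `p : P ⟶ X` (`↓p ≅ ν(x)` in `C/X`), then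
for every `f : X ⟶ Y`, `f ∘ x` is the absolute colimit of `f ∘ p` (`↓(f∘p) ≅ ν(f∘x)` in `C/Y`). -/
theorem absolute_colimit_preserved [HasTerminal C] (D : FactorizationData C)
    {X P : C} (p : P ⟶ X) (x : ⊤_ C ⟶ X)
    (h : Nonempty ((Over.mk (D.refl p) : Over X) ≅ Over.mk (D.refl x)))
    {Y : C} (f : X ⟶ Y) :
    Nonempty ((Over.mk (D.refl (p ≫ f)) : Over Y) ≅ Over.mk (D.refl (x ≫ f))) := by
  obtain ⟨ι⟩ := h
  obtain ⟨reflect_p⟩ := D.nonempty_overIso_refl_of_E_comp (D.eta_mem p) (g := D.refl p ≫ f)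
    (by rw [← Category.assoc, D.fac])
  obtain ⟨reflect_x⟩ := D.nonempty_overIso_refl_of_E_comp (D.eta_mem x) (g := D.refl x ≫ f)
    (by rw [← Category.assoc, D.fac])
  obtain ⟨transport⟩ := D.nonempty_overIso_refl_of_E_comp
    (D.E_of_isIso ((Over.forget X).mapIso ι).hom) (g := D.refl x ≫ f) (h := D.refl p ≫ f)
    (Over.w_assoc ι.hom f)
  exact ⟨reflect_p ≪≫ transport ≪≫ reflect_x.symm⟩
end

section
/- Let p: P ⥤ X and q: Q ⥤ X be functors between small categories. The discrete reflection presheaves ↓p and ↓q are naturally isomorphic if and only if for every functor f: X ⥤ Y into a small category Y and every object y of Y, y is a colimit of f ∘ p if and only if y is a colimit of f ∘ q. -/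
open CategoryTheory CategoryTheory.Limits

universe u

/-- `y` is a colimit of `g` if there is a colimit cocone on `g` with vertex `y`. -/
def IsColimitObj {D Y : Type u} [SmallCategory D] [SmallCategory Y] (g : D ⥤ Y) (y : Y) :
    Prop :=
  ∃ c : Cocone g, Nonempty (IsColimit c) ∧ c.pt = y


/-!
`↓p` is the colimit of `p ⋙ yoneda`, so by the Yoneda lemma a cocone on `p ⋙ f` with vertex `y`
is a morphism from `↓p` to the presheaf `Y(f -, y)`, naturally in `y`. An isomorphism
`↓p ≅ ↓q` therefore identifies the cocone functors of `p ⋙ f` and `q ⋙ f`, whose corepresenting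
objects are exactly the colimits. Conversely, in the small full subcategory of presheaves spanned
by the representables, `↓p` and `↓q`, the object `↓p` is a colimit of `p ⋙ yoneda`, hence by
hypothesis of `q ⋙ yoneda`, as is `↓q`.
-/

namespace CategoryTheory

theorem Zigzag.eq_of_hom {J : Type*} [Category J] {α : Sort*} {g : J → α}
    (hg : ∀ ⦃s t : J⦄, (s ⟶ t) → g s = g t) {s t : J} (h : Zigzag s t) : g s = g t := by
  induction h with
  | refl => rfl
  | tail _ hz ih => exact ih.trans (hz.elim (fun ⟨k⟩ => hg k) fun ⟨k⟩ => (hg k).symm)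

end CategoryTheory

section ReflPresheaf

variable {P X : Type u} [SmallCategory P] [SmallCategory X]

noncomputable def reflPresheafCocone (p : P ⥤ X) : Cocone (p ⋙ yoneda) where
  pt := reflPresheaf p
  ι.app a := { app x := TypeCat.ofHom fun h => Quotient.mk _ (StructuredArrow.mk h) }
  ι.naturality a a' k := by
    ext x h
    exact (Quotient.sound (Zigzag.of_hom (StructuredArrow.homMk k rfl))).symm

noncomputable def isColimitReflPresheafCocone (p : P ⥤ X) :
    IsColimit (reflPresheafCocone p) where
  desc s :=
    { app x :=
        let leg (t : StructuredArrow x.unop p) : s.pt.obj x := (s.ι.app t.right).app x t.hom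
        TypeCat.ofHom <| Quotient.lift leg fun _ _ => Zigzag.eq_of_hom (g := leg) fun t t' k => by
          simp only [leg, ← StructuredArrow.w k]
          exact (ConcreteCategory.congr_hom (NatTrans.congr_app (s.w k.right) x) t.hom).symm
      naturality x x' g := by
        ext t
        obtain ⟨t, rfl⟩ := Quotient.exists_rep t
        exact ConcreteCategory.congr_hom ((s.ι.app t.right).naturality g) t.hom }
  fac s a := by ext; rfl
  uniq s m hm := by
    ext x t
    obtain ⟨t, rfl⟩ := Quotient.exists_rep t
    exact ConcreteCategory.congr_hom (NatTrans.congr_app (hm t.right) x) t.hom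

end ReflPresheaf

section IsColimitObj

variable {D D' Y : Type u} [SmallCategory D] [SmallCategory D'] [SmallCategory Y]

theorem isColimitObj_iff_nonempty_corepresentableBy (g : D ⥤ Y) (y : Y) :
    IsColimitObj g y ↔ Nonempty (g.cocones.CorepresentableBy y) := by
  constructor
  · rintro ⟨c, ⟨hc⟩, rfl⟩
    exact ⟨hc.corepresentableBy⟩
  · rintro ⟨h⟩
    exact ⟨_, ⟨IsColimit.ofCorepresentableBy h⟩, rfl⟩

theorem IsColimitObj.of_coconesIso {g : D ⥤ Y} {g' : D' ⥤ Y} (e : g.cocones ≅ g'.cocones)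
    {y : Y} (h : IsColimitObj g y) : IsColimitObj g' y := by
  rw [isColimitObj_iff_nonempty_corepresentableBy] at h ⊢
  exact h.map (·.ofIso e)

theorem IsColimitObj.nonempty_iso {g : D ⥤ Y} {y y' : Y} (h : IsColimitObj g y)
    (h' : IsColimitObj g y') : Nonempty (y ≅ y') := by
  obtain ⟨c, ⟨hc⟩, rfl⟩ := h
  obtain ⟨c', ⟨hc'⟩, rfl⟩ := h'
  exact ⟨hc.coconePointUniqueUpToIso hc'⟩

end IsColimitObj

section CoconesCompYoneda

variable {J J' : Type u} [SmallCategory J] [SmallCategory J'] {X : Type u} [SmallCategory X]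
  {Y : Type*} [Category.{u} Y]

/-- A cocone on `g ⋙ f` with vertex `y` is, by the Yoneda lemma, a cocone on `g ⋙ yoneda` with
vertex the presheaf `Y(f -, y)`. -/
def coconesCompIsoYoneda (g : J ⥤ X) (f : X ⥤ Y) :
    (g ⋙ f).cocones ≅ (yoneda ⋙ (Functor.whiskeringLeft _ _ _).obj f.op) ⋙ (g ⋙ yoneda).cocones :=
  NatIso.ofComponents (fun y => Equiv.toIso
    { toFun c := { app j := yonedaEquiv.symm (c.app j)
                   naturality j j' k := by
                     simp only [Functor.comp_map, Functor.const_obj_map,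
                       yonedaEquiv_symm_naturality_left]
                     simpa using c.naturality k }
      invFun c := { app j := yonedaEquiv (c.app j)
                    naturality j j' k := by
                      have h := c.naturality k
                      simp only [Functor.comp_map, Functor.const_obj_map] at h ⊢
                      exact (yonedaEquiv_naturality (c.app j') (g.map k)).trans (by simp [h]) }
      left_inv c := NatTrans.ext (funext fun j => yonedaEquiv.apply_symm_apply _)
      right_inv c := NatTrans.ext (funext fun j => yonedaEquiv.symm_apply_apply _) })
    fun h => by
      ext c
      exact NatTrans.ext (funext fun j =>
        (yonedaEquiv_symm_naturality_right _ (f.op.whiskerLeft (yoneda.map h)) (c.app j)).symm)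

def coconesCompIsoOfIsColimit {g : J ⥤ X} {g' : J' ⥤ X} {c : Cocone (g ⋙ yoneda)}
    {c' : Cocone (g' ⋙ yoneda)} (hc : IsColimit c) (hc' : IsColimit c') (e : c.pt ≅ c'.pt)
    (f : X ⥤ Y) : (g ⋙ f).cocones ≅ (g' ⋙ f).cocones :=
  coconesCompIsoYoneda g f ≪≫ Functor.isoWhiskerLeft _
    (hc.corepresentableBy.toIso.symm ≪≫ coyoneda.mapIso e.symm.op ≪≫
      hc'.corepresentableBy.toIso) ≪≫ (coconesCompIsoYoneda g' f).symm

end CoconesCompYoneda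

section Representables

variable {X : Type u} [SmallCategory X]

/-- Unlike the whole presheaf category, this full subcategory of it is small. -/
def yonedaAdjoining {ι : Type*} (A : ι → Xᵒᵖ ⥤ Type u) :
    X ⥤ InducedCategory (Xᵒᵖ ⥤ Type u) (Sum.elim yoneda.obj A) where
  obj := Sum.inl
  map k := InducedCategory.homMk (yoneda.map k)

theorem isColimitObj_of_isColimit_inducedFunctor {Z J : Type u} [SmallCategory J]
    {C : Type*} [Category.{u} C] {F : Z → C} {K : J ⥤ InducedCategory C F}
    {c : Cocone (K ⋙ inducedFunctor F)} (hc : IsColimit c) (z : Z) (hz : F z = c.pt) :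
    IsColimitObj K z := by
  obtain ⟨pt, ι⟩ := c
  subst hz
  exact ⟨{ pt := z
           ι.app j := InducedCategory.homMk (ι.app j)
           ι.naturality _ _ k := InducedCategory.hom_ext (by simpa using ι.naturality k) },
    ⟨isColimitOfReflects (inducedFunctor F) hc⟩, rfl⟩

theorem nonempty_iso_of_forall_isColimitObj_comp_iff {J J' : Type u} [SmallCategory J]
    [SmallCategory J'] {g : J ⥤ X} {g' : J' ⥤ X} {c : Cocone (g ⋙ yoneda)}
    {c' : Cocone (g' ⋙ yoneda)} (hc : IsColimit c) (hc' : IsColimit c')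
    (h : ∀ (Y : Type u) [SmallCategory Y] (f : X ⥤ Y) (y : Y),
      IsColimitObj (g ⋙ f) y ↔ IsColimitObj (g' ⋙ f) y) :
    Nonempty (c.pt ≅ c'.pt) := by
  let A (b : Bool) : Xᵒᵖ ⥤ Type u := bif b then c'.pt else c.pt
  have hg : IsColimitObj (g ⋙ yonedaAdjoining A) (.inr false) :=
    isColimitObj_of_isColimit_inducedFunctor hc _ rfl
  have hg' : IsColimitObj (g' ⋙ yonedaAdjoining A) (.inr true) :=
    isColimitObj_of_isColimit_inducedFunctor hc' _ rfl
  obtain ⟨i⟩ := ((h _ _ _).1 hg).nonempty_iso hg'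
  exact ⟨(inducedFunctor _).mapIso i⟩

end Representables

theorem nonempty_iso_iff_forall_isColimitObj_comp_iff {X J J' : Type u} [SmallCategory X]
    [SmallCategory J] [SmallCategory J'] {g : J ⥤ X} {g' : J' ⥤ X} {c : Cocone (g ⋙ yoneda)}
    {c' : Cocone (g' ⋙ yoneda)} (hc : IsColimit c) (hc' : IsColimit c') :
    Nonempty (c.pt ≅ c'.pt) ↔ ∀ (Y : Type u) [SmallCategory Y] (f : X ⥤ Y) (y : Y),
      IsColimitObj (g ⋙ f) y ↔ IsColimitObj (g' ⋙ f) y :=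
  ⟨fun ⟨e⟩ _ _ f _ => ⟨.of_coconesIso (coconesCompIsoOfIsColimit hc hc' e f),
      .of_coconesIso (coconesCompIsoOfIsColimit hc' hc e.symm f)⟩,
    nonempty_iso_of_forall_isColimitObj_comp_iff hc hc'⟩

/-- for functors `p : P ⥤ X`, `q : Q ⥤ X` between small categories, the discrete
reflection presheaves `↓p` and `↓q` are naturally isomorphic iff for every functor
`f : X ⥤ Y` into a small category and every object `y` of `Y`, `y` is a colimit of `f ∘ p`
iff it is a colimit of `f ∘ q`. -/
theorem reflection_iso_iff_same_colimits {P Q X : Type u}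
    [SmallCategory P] [SmallCategory Q] [SmallCategory X] (p : P ⥤ X) (q : Q ⥤ X) :
    Nonempty (reflPresheaf p ≅ reflPresheaf q) ↔
      ∀ (Y : Type u) [SmallCategory Y] (f : X ⥤ Y) (y : Y),
        IsColimitObj (p ⋙ f) y ↔ IsColimitObj (q ⋙ f) y :=
  nonempty_iso_iff_forall_isColimitObj_comp_iff (isColimitReflPresheafCocone p)
    (isColimitReflPresheafCocone q)
end
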